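/- Let n ∈ ℕ, 0 < α < n, and let f : ℝⁿ → ℝ be measurable with supp f ⊆ ℝⁿ ∖ 2Q for an open cube Q ⊆ ℝⁿ centered at the origin (where 2Q is the cube with the same center and twice the side length). Then for all x₁, x₂ ∈ Q and all y ∈ ℝⁿ ∖ 2Q, | |x₁ − y|^(α−n) − |x₂ − y|^(α−n) | ≤ C_{n,α} |x₁ − x₂| / |y|^(n−α+1) for a constant C_{n,α} depending only on n and α; consequently, if moreover ‖f‖_{M^α_1(ℝⁿ)} < ∞ and I_α f is finite at every point of Q, then |I_α f(x₁) − I_α f(x₂)| ≤ C_{n,α} (|x₁ − x₂| / ℓ(Q)) ‖f‖_{M^α_1(ℝⁿ)} for all x₁, x₂ ∈ Q. -/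

import Mathlib

open MeasureTheory Filter Set Metric ENNReal

noncomputable section

abbrev Rn (n : ℕ) := EuclideanSpace ℝ (Fin n)

/-- The open axis-parallel cube with center `z` and side length `l`. -/
def cube (n : ℕ) (z : Rn n) (l : ℝ) : Set (Rn n) := {x | ∀ i, |x i - z i| < l / 2}

/-- The `β`-dimensional Hausdorff content `H^β_∞`. -/
def hContent (n : ℕ) (β : ℝ) (E : Set (Rn n)) : ℝ≥0∞ :=
  ⨅ (c : ℕ → Rn n) (r : ℕ → NNReal) (_ : E ⊆ ⋃ i, Metric.ball (c i) (r i)),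
    ∑' i, ENNReal.ofReal (Real.pi ^ (β / 2) / Real.Gamma (β / 2 + 1) * (r i : ℝ) ^ β)

/-- Choquet integral of `g` over `Ω` with respect to `H^β_∞`. -/
def choquet (n : ℕ) (β : ℝ) (Ω : Set (Rn n)) (g : Rn n → ℝ) : ℝ≥0∞ :=
  ∫⁻ t in Set.Ioi (0 : ℝ), hContent n β {x | x ∈ Ω ∧ t < g x}

/-- The normalization constant `γ(α)` of the Riesz potential. -/
def rieszConst (n : ℕ) (α : ℝ) : ℝ :=
  Real.pi ^ ((n : ℝ) / 2) * 2 ^ α * Real.Gamma (α / 2) / Real.Gamma (((n : ℝ) - α) / 2)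

/-- The Riesz potential `I_α f`. -/
def riesz (n : ℕ) (α : ℝ) (f : Rn n → ℝ) (x : Rn n) : ℝ :=
  (rieszConst n α)⁻¹ * ∫ y, f y / ‖x - y‖ ^ ((n : ℝ) - α)

/-- The `BMO^β` seminorm. -/
def bmoBeta (n : ℕ) (β : ℝ) (u : Rn n → ℝ) : ℝ≥0∞ :=
  ⨆ (z : Rn n) (l : ℝ) (_ : 0 < l),
    ⨅ c : ℝ, choquet n β (cube n z l) (fun x => |u x - c|) / ENNReal.ofReal (l ^ β)

/-- The Morrey norm `‖f‖_{M^α_p}`. -/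
def morrey (n : ℕ) (α p : ℝ) (f : Rn n → ℝ) : ℝ≥0∞ :=
  ⨆ (z : Rn n) (l : ℝ) (_ : 0 < l),
    ENNReal.ofReal (l ^ α) *
      ((∫⁻ y in cube n z l, ENNReal.ofReal (|f y| ^ p)) / ENNReal.ofReal (l ^ (n : ℝ))) ^ (1 / p)

/-- The weak Lebesgue norm `‖f‖_{L^{q,∞}}`. -/
def weakNorm (n : ℕ) (q : ℝ) (f : Rn n → ℝ) : ℝ≥0∞ :=
  ⨆ (lam : ℝ) (_ : 0 < lam),
    ENNReal.ofReal lam * (volume {x : Rn n | lam < |f x|}) ^ (1 / q)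

/-- The classical `BMO` seminorm. -/
def bmoSemi (n : ℕ) (u : Rn n → ℝ) : ℝ≥0∞ :=
  ⨆ (z : Rn n) (l : ℝ) (_ : 0 < l),
    (∫⁻ x in cube n z l, ENNReal.ofReal |u x - ⨍ y in cube n z l, u y|) / volume (cube n z l)

/-- The fractional maximal function `M_η f`. -/
def fracMax (n : ℕ) (η : ℝ) (f : Rn n → ℝ) (x : Rn n) : ℝ≥0∞ :=
  ⨆ (r : ℝ) (_ : 0 < r),
    ENNReal.ofReal (r ^ (η - (n : ℝ))) * ∫⁻ y in Metric.ball x r, ENNReal.ofReal |f y|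


lemma aux_one_dim {q m a b : ℝ} (hq : 0 < q) (hm : 0 < m) (ha : m ≤ a) (hb : m ≤ b) :
    |1 / a ^ q - 1 / b ^ q| ≤ q * m ^ (-q - 1) * |a - b| := by
  have hderiv : ∀ t ∈ Ici m, HasDerivWithinAt (fun t : ℝ => t ^ (-q))
      ((-q) * t ^ (-q - 1)) (Ici m) t := fun t ht =>
    (Real.hasDerivAt_rpow_const (Or.inl (by nlinarith [mem_Ici.mp ht]))).hasDerivWithinAt
  have hbound : ∀ t ∈ Ici m, ‖(-q) * t ^ (-q - 1)‖ ≤ q * m ^ (-q - 1) := by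
    intro t ht
    rw [norm_mul, norm_neg, Real.norm_eq_abs, Real.norm_eq_abs, abs_of_pos hq,
      abs_of_pos (Real.rpow_pos_of_pos (lt_of_lt_of_le hm ht) _)]
    exact mul_le_mul_of_nonneg_left
      (Real.rpow_le_rpow_of_nonpos hm ht (by linarith)) hq.le
  have := Convex.norm_image_sub_le_of_norm_hasDerivWithin_le hderiv hbound
    (convex_Ici m) (mem_Ici.mpr hb) (mem_Ici.mpr ha)
  rw [Real.norm_eq_abs, Real.norm_eq_abs] at this
  calc |1 / a ^ q - 1 / b ^ q| = |a ^ (-q) - b ^ (-q)| := by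
        rw [Real.rpow_neg (by linarith), Real.rpow_neg (by linarith), one_div, one_div]
    _ ≤ q * m ^ (-q - 1) * |a - b| := this

lemma aux_coord_le {n : ℕ} (y : EuclideanSpace ℝ (Fin n)) (i : Fin n) : |y i| ≤ ‖y‖ := by
  rw [EuclideanSpace.norm_eq]
  rw [show |y i| = √(‖y i‖^2) by rw [Real.sqrt_sq_eq_abs]; simp]
  exact Real.sqrt_le_sqrt (Finset.single_le_sum (f := fun j => ‖y j‖^2)
    (fun j _ => sq_nonneg _) (Finset.mem_univ i))

lemma aux_norm_le {n : ℕ} (y : EuclideanSpace ℝ (Fin n)) (c : ℝ) (hc : 0 ≤ c)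
    (h : ∀ i, |y i| ≤ c) : ‖y‖ ≤ Real.sqrt n * c := by
  rw [EuclideanSpace.norm_eq]
  have : ∑ i : Fin n, ‖y i‖^2 ≤ n * c^2 := by
    calc ∑ i : Fin n, ‖y i‖^2 ≤ ∑ _i : Fin n, c^2 := by
          apply Finset.sum_le_sum; intro i _
          rw [Real.norm_eq_abs]; exact pow_le_pow_left₀ (abs_nonneg _) (h i) 2
      _ = n * c^2 := by simp [Finset.sum_const, mul_comm]
  calc √(∑ i : Fin n, ‖y i‖^2) ≤ √(n * c^2) := Real.sqrt_le_sqrt this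
    _ = √n * c := by rw [Real.sqrt_mul (Nat.cast_nonneg n), Real.sqrt_sq hc]

lemma aux_geom {n : ℕ} {l : ℝ} (hl : 0 < l) {x y : Rn n}
    (hx : x ∈ cube n 0 l) (hy : y ∉ cube n 0 (2 * l)) :
    l ≤ ‖y‖ ∧ ‖y‖ / (1 + √n) ≤ ‖x - y‖ := by
  simp only [cube, mem_setOf_eq, not_forall, not_lt, PiLp.zero_apply, sub_zero] at hx hy
  obtain ⟨i, hi⟩ := hy
  have hi' : l ≤ |y i| := by
    simpa using hi.trans_eq (by ring_nf)
  have hyl : l ≤ ‖y‖ := hi'.trans (aux_coord_le y i)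
  have hxi : |x i| < l / 2 := by simpa using hx i
  have hxyi : l / 2 ≤ |x i - y i| := by
    have := abs_sub_abs_le_abs_sub (y i) (x i)
    have : |y i| - |x i| ≤ |x i - y i| := by rw [abs_sub_comm]; linarith
    linarith
  have hxy_coord : |x i - y i| ≤ ‖x - y‖ := by
    have := aux_coord_le (x - y) i
    simpa using this
  have hxy_half : l / 2 ≤ ‖x - y‖ := hxyi.trans hxy_coord
  have hxnorm : ‖x‖ ≤ √n * (l / 2) := aux_norm_le x (l/2) (by linarith) (fun j => by simpa using (hx j).le)
  have hsn : (0:ℝ) ≤ √n := Real.sqrt_nonneg _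
  have : ‖y‖ ≤ ‖x - y‖ + ‖x‖ := by
    calc ‖y‖ = ‖(x - y) - x‖ := by rw [sub_sub_cancel_left, norm_neg]
      _ ≤ ‖x - y‖ + ‖x‖ := norm_sub_le _ _
  have : ‖y‖ ≤ (1 + √n) * ‖x - y‖ := by nlinarith
  refine ⟨hyl, ?_⟩
  rw [div_le_iff₀ (by positivity)]
  linarith [this, mul_comm (1 + √n) ‖x - y‖]

lemma aux_kernel {n : ℕ} {α : ℝ} (hα0 : 0 < α) (hαn : α < n) {l : ℝ} (hl : 0 < l)
    {x₁ x₂ y : Rn n} (h1 : x₁ ∈ cube n 0 l) (h2 : x₂ ∈ cube n 0 l)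
    (hy : y ∉ cube n 0 (2 * l)) :
    |1 / ‖x₁ - y‖ ^ ((n : ℝ) - α) - 1 / ‖x₂ - y‖ ^ ((n : ℝ) - α)|
      ≤ ((n : ℝ) - α) * (1 + √n) ^ ((n : ℝ) - α + 1) * ‖x₁ - x₂‖ / ‖y‖ ^ ((n : ℝ) - α + 1) := by
  set q : ℝ := (n : ℝ) - α with hqdef
  have hq : 0 < q := by simp [hqdef]; linarith
  obtain ⟨hyl, hm1⟩ := aux_geom hl h1 hy
  obtain ⟨-, hm2⟩ := aux_geom hl h2 hy
  have hsn : (0:ℝ) ≤ √n := Real.sqrt_nonneg _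
  have hy0 : 0 < ‖y‖ := lt_of_lt_of_le hl hyl
  have hm : 0 < ‖y‖ / (1 + √n) := by positivity
  have key := aux_one_dim hq hm hm1 hm2
  have habd : |‖x₁ - y‖ - ‖x₂ - y‖| ≤ ‖x₁ - x₂‖ := by
    have := abs_norm_sub_norm_le (x₁ - y) (x₂ - y)
    rwa [sub_sub_sub_cancel_right] at this
  have hmpow : (‖y‖ / (1 + √n)) ^ (-q - 1) = (1 + √n) ^ (q + 1) / ‖y‖ ^ (q + 1) := by
    rw [show (-q - 1 : ℝ) = -(q + 1) by ring, Real.rpow_neg hm.le,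
      Real.div_rpow (norm_nonneg _) (by positivity), inv_div]
  calc |1 / ‖x₁ - y‖ ^ q - 1 / ‖x₂ - y‖ ^ q|
      ≤ q * (‖y‖ / (1 + √n)) ^ (-q - 1) * |‖x₁ - y‖ - ‖x₂ - y‖| := key
    _ ≤ q * (‖y‖ / (1 + √n)) ^ (-q - 1) * ‖x₁ - x₂‖ :=
        mul_le_mul_of_nonneg_left habd (by positivity)
    _ = q * (1 + √n) ^ (q + 1) * ‖x₁ - x₂‖ / ‖y‖ ^ (q + 1) := by
        rw [hmpow]; ring

lemma morrey_cube_bound {n : ℕ} {α : ℝ} (f : Rn n → ℝ) {l' : ℝ} (hl' : 0 < l') :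
    ∫⁻ y in cube n 0 l', ENNReal.ofReal |f y|
      ≤ ENNReal.ofReal (l' ^ ((n : ℝ) - α)) * morrey n α 1 f := by
  set I := ∫⁻ y in cube n 0 l', ENNReal.ofReal |f y| with hI
  have h1 : ENNReal.ofReal (l' ^ α) * (I / ENNReal.ofReal (l' ^ (n : ℝ))) ≤ morrey n α 1 f := by
    refine le_trans (le_of_eq ?_) (le_iSup_of_le (0 : Rn n) (le_iSup_of_le l'
      (le_iSup_of_le hl' le_rfl)))
    simp [Real.rpow_one, hI]
  have ha0 : ENNReal.ofReal (l' ^ α) ≠ 0 := by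
    simp only [ne_eq, ENNReal.ofReal_eq_zero, not_le]; positivity
  have hc0 : ENNReal.ofReal (l' ^ (n : ℝ)) ≠ 0 := by
    simp only [ne_eq, ENNReal.ofReal_eq_zero, not_le]; positivity
  have hctop : ENNReal.ofReal (l' ^ (n : ℝ)) ≠ ⊤ := ofReal_ne_top
  have h2 : I / ENNReal.ofReal (l' ^ (n : ℝ))
      ≤ (ENNReal.ofReal (l' ^ α))⁻¹ * morrey n α 1 f :=
    (ENNReal.mul_le_iff_le_inv ha0 ofReal_ne_top).mp h1
  calc I = I / ENNReal.ofReal (l' ^ (n : ℝ)) * ENNReal.ofReal (l' ^ (n : ℝ)) :=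
        (ENNReal.div_mul_cancel hc0 hctop).symm
    _ ≤ (ENNReal.ofReal (l' ^ α))⁻¹ * morrey n α 1 f * ENNReal.ofReal (l' ^ (n : ℝ)) :=
        mul_le_mul_left h2 _
    _ = ENNReal.ofReal (l' ^ ((n : ℝ) - α)) * morrey n α 1 f := by
        rw [← ENNReal.ofReal_inv_of_pos (by positivity), ← Real.rpow_neg hl'.le]
        rw [mul_comm _ (morrey n α 1 f), mul_assoc, ← ENNReal.ofReal_mul (by positivity),
          ← Real.rpow_add hl', mul_comm]
        ring_nf

lemma aux_const (k : ℕ) {l q : ℝ} (hl : 0 < l) :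
    ((2:ℝ)^k * l) ^ (-(q+1)) * ((2:ℝ)^(k+2) * l) ^ q = 4 ^ q / l * (1/2)^k := by
  have h2 : (0:ℝ) < 2 := two_pos
  rw [Real.mul_rpow (by positivity) hl.le, Real.mul_rpow (by positivity) hl.le,
    ← Real.rpow_natCast 2 k, ← Real.rpow_natCast 2 (k+2),
    ← Real.rpow_mul h2.le, ← Real.rpow_mul h2.le]
  rw [mul_mul_mul_comm, ← Real.rpow_add h2, ← Real.rpow_add hl]
  push_cast
  rw [show ((k:ℝ)) * (-(q+1)) + ((k:ℝ)+2) * q = 2 * q + (-(k:ℝ)) by ring,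
    show (-(q+1)) + q = (-1 : ℝ) by ring,
    Real.rpow_add h2, Real.rpow_neg_one, Real.rpow_neg h2.le,
    show (2:ℝ) ^ (2*q) = 4 ^ q by
      rw [Real.rpow_mul h2.le]; norm_num,
    Real.rpow_natCast]
  rw [div_eq_mul_inv, one_div, inv_pow]
  ring

lemma cube_meas {n : ℕ} (z : Rn n) (l : ℝ) : MeasurableSet (cube n z l) := by
  have : cube n z l = ⋂ i, {x : Rn n | |x i - z i| < l / 2} := by
    ext x; simp [cube]
  rw [this]
  exact MeasurableSet.iInter fun i =>
    measurableSet_lt (by measurability) measurable_const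

lemma cube_mono {n : ℕ} (z : Rn n) {l l' : ℝ} (h : l ≤ l') : cube n z l ⊆ cube n z l' := by
  intro x hx i
  exact lt_of_lt_of_le (hx i) (by linarith)

lemma aux_tail {n : ℕ} {α : ℝ} (hα0 : 0 < α) (hαn : α < n) {l : ℝ} (hl : 0 < l)
    (f : Rn n → ℝ) (hf : Measurable f) :
    ∫⁻ y in (cube n 0 (2*l))ᶜ, ENNReal.ofReal (|f y| / ‖y‖ ^ ((n:ℝ) - α + 1))
      ≤ ENNReal.ofReal (2 * 4 ^ ((n:ℝ) - α) / l) * morrey n α 1 f := by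
  classical
  set q : ℝ := (n:ℝ) - α with hq
  have hq0 : 0 < q := by simp only [hq]; linarith
  set M := morrey n α 1 f with hM
  set B : ℕ → Set (Rn n) := fun k => (cube n 0 (2^(k+1) * l))ᶜ with hB
  set A : ℕ → Set (Rn n) := fun k => B k \ B (k+1) with hA
  have hBmeas : ∀ k, MeasurableSet (B k) := fun k => (cube_meas _ _).compl
  have hAmeas : ∀ k, MeasurableSet (A k) := fun k => (hBmeas k).diff (hBmeas (k+1))
  have hBanti : ∀ j k : ℕ, j ≤ k → B k ⊆ B j := by
    intro j k hjk
    apply compl_subset_compl.mpr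
    apply cube_mono
    have h1 : (2:ℝ)^(j+1) ≤ 2^(k+1) := pow_le_pow_right₀ one_le_two (by omega)
    nlinarith
  have hdisj : Pairwise (Function.onFun Disjoint A) := by
    have key : ∀ j k : ℕ, j < k → Disjoint (A j) (A k) := by
      intro j k hjk
      apply Set.disjoint_left.mpr
      intro y hyj hyk
      exact hyj.2 (hBanti (j+1) k hjk hyk.1)
    intro j k hjk
    rcases hjk.lt_or_gt with h | h
    · exact key j k h
    · exact (key k j h).symm
  have hUnion : (cube n 0 (2*l))ᶜ = ⋃ k, A k := by
    have hB0 : B 0 = (cube n 0 (2*l))ᶜ := by rw [hB]; norm_num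
    ext y
    constructor
    · intro hy
      have hy0 : y ∈ B 0 := by rw [hB0]; exact hy
      have hex : ∃ k, y ∉ B k := by
        obtain ⟨k, hk⟩ : ∃ k : ℕ, ‖y‖ / l < 2 ^ k := pow_unbounded_of_one_lt (‖y‖ / l) one_lt_two
        refine ⟨k, ?_⟩
        simp only [hB, mem_compl_iff, not_not]
        intro i
        have h1 : |y i| ≤ ‖y‖ := by
          simpa using aux_coord_le y i
        have h2 : ‖y‖ < 2^k * l := by
          rw [div_lt_iff₀ hl] at hk; linarith [hk]
        have : (2:ℝ)^(k+1) * l / 2 = 2^k * l := by ring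
        simp only [PiLp.zero_apply, sub_zero]
        rw [this]; linarith
      have hk0ne : Nat.find hex ≠ 0 := by
        intro h
        exact (h ▸ Nat.find_spec hex) hy0
      refine mem_iUnion.mpr ⟨Nat.find hex - 1, ?_, ?_⟩
      · by_contra hc
        exact Nat.find_min hex (Nat.sub_lt (Nat.pos_of_ne_zero hk0ne) one_pos) hc
      · have : Nat.find hex - 1 + 1 = Nat.find hex := Nat.succ_pred_eq_of_pos (Nat.pos_of_ne_zero hk0ne)
        rw [this]
        exact Nat.find_spec hex
    · intro hy
      obtain ⟨k, hk⟩ := mem_iUnion.mp hy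
      rw [← hB0]
      exact hBanti 0 k (Nat.zero_le k) hk.1
  rw [hUnion, lintegral_iUnion hAmeas hdisj]
  have term_bound : ∀ k : ℕ, (∫⁻ y in A k, ENNReal.ofReal (|f y| / ‖y‖ ^ (q + 1)))
      ≤ ENNReal.ofReal (4 ^ q / l * (1/2)^k) * M := by
    intro k
    have hmk : (0:ℝ) < 2^k * l := by positivity
    have step1 : (∫⁻ y in A k, ENNReal.ofReal (|f y| / ‖y‖ ^ (q + 1)))
        ≤ ∫⁻ y in A k, ENNReal.ofReal (((2:ℝ)^k * l) ^ (-(q+1)) * |f y|) := by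
      apply setLIntegral_mono
      · exact ENNReal.measurable_ofReal.comp (hf.abs.const_mul _)
      · intro y hy
        apply ENNReal.ofReal_le_ofReal
        have hyBk : y ∈ B k := hy.1
        simp only [hB, mem_compl_iff, cube, mem_setOf_eq, not_forall, not_lt] at hyBk
        obtain ⟨i, hi⟩ := hyBk
        have h1 : (2:ℝ)^k * l ≤ |y i| := by
          have : (2:ℝ)^(k+1) * l / 2 = 2^k * l := by ring
          simp only [PiLp.zero_apply, sub_zero] at hi
          linarith [this ▸ hi]
        have h2 : (2:ℝ)^k * l ≤ ‖y‖ := h1.trans (by simpa using aux_coord_le y i)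
        have h3 : ((2:ℝ)^k * l) ^ (q+1) ≤ ‖y‖ ^ (q+1) :=
          Real.rpow_le_rpow hmk.le h2 (by linarith)
        have h4 : |f y| / ‖y‖ ^ (q+1) ≤ |f y| / ((2:ℝ)^k * l) ^ (q+1) :=
          div_le_div_of_nonneg_left (abs_nonneg _) (Real.rpow_pos_of_pos hmk _) h3
        calc |f y| / ‖y‖ ^ (q+1) ≤ |f y| / ((2:ℝ)^k * l) ^ (q+1) := h4
          _ = ((2:ℝ)^k * l) ^ (-(q+1)) * |f y| := by
              rw [Real.rpow_neg hmk.le, div_eq_mul_inv, mul_comm]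
    have step2 : (∫⁻ y in A k, ENNReal.ofReal (((2:ℝ)^k * l) ^ (-(q+1)) * |f y|))
        = ENNReal.ofReal (((2:ℝ)^k * l) ^ (-(q+1))) * ∫⁻ y in A k, ENNReal.ofReal (|f y|) := by
      simp_rw [ENNReal.ofReal_mul (Real.rpow_nonneg hmk.le _)]
      exact lintegral_const_mul' _ _ ofReal_ne_top
    have step3 : (∫⁻ y in A k, ENNReal.ofReal (|f y|))
        ≤ ∫⁻ y in cube n 0 ((2:ℝ)^(k+2) * l), ENNReal.ofReal (|f y|) := by
      apply lintegral_mono_set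
      intro y hy
      have : y ∉ B (k+1) := hy.2
      simp only [hB, mem_compl_iff, not_not] at this
      exact this
    have step4 : (∫⁻ y in cube n 0 ((2:ℝ)^(k+2) * l), ENNReal.ofReal (|f y|))
        ≤ ENNReal.ofReal (((2:ℝ)^(k+2) * l) ^ q) * M :=
      morrey_cube_bound f (by positivity)
    calc (∫⁻ y in A k, ENNReal.ofReal (|f y| / ‖y‖ ^ (q + 1)))
        ≤ ENNReal.ofReal (((2:ℝ)^k * l) ^ (-(q+1))) * ∫⁻ y in A k, ENNReal.ofReal (|f y|) := by
          rw [← step2]; exact step1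
      _ ≤ ENNReal.ofReal (((2:ℝ)^k * l) ^ (-(q+1)))
            * (ENNReal.ofReal (((2:ℝ)^(k+2) * l) ^ q) * M) :=
          mul_le_mul_right (step3.trans step4) _
      _ = ENNReal.ofReal (4 ^ q / l * (1/2)^k) * M := by
          rw [← mul_assoc, ← ENNReal.ofReal_mul (Real.rpow_nonneg hmk.le _), aux_const k hl]
  calc (∑' k, ∫⁻ y in A k, ENNReal.ofReal (|f y| / ‖y‖ ^ (q + 1)))
      ≤ ∑' k : ℕ, ENNReal.ofReal (4 ^ q / l * (1/2)^k) * M := ENNReal.tsum_le_tsum term_bound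
    _ = ENNReal.ofReal (2 * 4 ^ q / l) * M := by
        have : ∀ k : ℕ, ENNReal.ofReal ((4:ℝ) ^ q / l * (1/2)^k) * M
            = ENNReal.ofReal ((4:ℝ) ^ q / l) * ((2⁻¹ : ℝ≥0∞)^k * M) := by
          intro k
          rw [ENNReal.ofReal_mul (by positivity), mul_assoc]
          congr 2
          rw [one_div, ENNReal.ofReal_pow (by norm_num), ENNReal.ofReal_inv_of_pos two_pos,
            ENNReal.ofReal_ofNat]
        simp_rw [this]
        rw [ENNReal.tsum_mul_left, ENNReal.tsum_mul_right, ENNReal.tsum_geometric,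
          ENNReal.one_sub_inv_two, inv_inv, ← mul_assoc]
        congr 1
        rw [show (2:ℝ≥0∞) = ENNReal.ofReal 2 by simp, mul_comm,
          ← ENNReal.ofReal_mul (by norm_num)]
        congr 1
        ring

/-- Kernel smoothness estimate and Lipschitz continuity of `I_α f` on `Q` for `f` supported
outside `2Q` (cube centered at the origin). -/
theorem stmt18 (n : ℕ) (α : ℝ) (hα0 : 0 < α) (hαn : α < n) :
    ∃ C : ℝ, 0 < C ∧ ∀ l : ℝ, 0 < l →
      (∀ x₁ ∈ cube n (0 : Rn n) l, ∀ x₂ ∈ cube n (0 : Rn n) l,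
        ∀ y ∉ cube n (0 : Rn n) (2 * l),
          |1 / ‖x₁ - y‖ ^ ((n : ℝ) - α) - 1 / ‖x₂ - y‖ ^ ((n : ℝ) - α)|
            ≤ C * ‖x₁ - x₂‖ / ‖y‖ ^ ((n : ℝ) - α + 1)) ∧
      ∀ f : Rn n → ℝ, Measurable f →
        Function.support f ⊆ (cube n (0 : Rn n) (2 * l))ᶜ →
        morrey n α 1 f < ⊤ →
        (∀ x ∈ cube n (0 : Rn n) l,
          Integrable (fun y => f y / ‖x - y‖ ^ ((n : ℝ) - α)) volume) →
        ∀ x₁ ∈ cube n (0 : Rn n) l, ∀ x₂ ∈ cube n (0 : Rn n) l,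
          |riesz n α f x₁ - riesz n α f x₂|
            ≤ C * (‖x₁ - x₂‖ / l) * (morrey n α 1 f).toReal := by
  set q : ℝ := (n : ℝ) - α with hqdef
  have hq0 : 0 < q := by simp only [hqdef]; linarith
  have hsn : (0:ℝ) ≤ √n := Real.sqrt_nonneg _
  set C₁ : ℝ := q * (1 + √n) ^ (q + 1) with hC₁
  have hC₁0 : 0 < C₁ := by
    apply mul_pos hq0 (Real.rpow_pos_of_pos (by linarith) _)
  have hγ : 0 < rieszConst n α := by
    unfold rieszConst
    apply _root_.div_pos
    · apply _root_.mul_pos (_root_.mul_pos ?_ ?_) ?_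
      · exact Real.rpow_pos_of_pos Real.pi_pos _
      · exact Real.rpow_pos_of_pos two_pos _
      · exact Real.Gamma_pos_of_pos (by linarith)
    · exact Real.Gamma_pos_of_pos (by simp only [hqdef] at hq0 ⊢; linarith)
  set s : ℝ := (rieszConst n α)⁻¹ * (2 * 4 ^ q) with hs
  have hs0 : 0 ≤ s := by
    apply mul_nonneg (inv_nonneg.mpr hγ.le)
    positivity
  set C : ℝ := (C₁ + 1) * (1 + s) with hC
  have hCpos : 0 < C := by nlinarith
  have hC1le : C₁ ≤ C := by nlinarith
  have hsle : (rieszConst n α)⁻¹ * (2 * 4 ^ q) * C₁ ≤ C := by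
    rw [← hs]; nlinarith
  refine ⟨C, hCpos, fun l hl => ⟨?_, ?_⟩⟩
  · intro x₁ h1 x₂ h2 y hy
    have hker := aux_kernel hα0 hαn hl h1 h2 hy
    refine hker.trans ?_
    have hy0 : 0 < ‖y‖ := lt_of_lt_of_le hl (aux_geom hl h1 hy).1
    have hYpos : 0 < ‖y‖ ^ (q + 1) := Real.rpow_pos_of_pos hy0 _
    gcongr
  · intro f hfm hsupp hMfin hInt x₁ h1 x₂ h2
    set M := morrey n α 1 f with hMdef
    set g₁ : Rn n → ℝ := fun y => f y / ‖x₁ - y‖ ^ q with hg₁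
    set g₂ : Rn n → ℝ := fun y => f y / ‖x₂ - y‖ ^ q with hg₂
    have hInt1 : Integrable g₁ volume := hInt x₁ h1
    have hInt2 : Integrable g₂ volume := hInt x₂ h2
    have hdiff : riesz n α f x₁ - riesz n α f x₂
        = (rieszConst n α)⁻¹ * ∫ y, (g₁ y - g₂ y) := by
      unfold riesz
      rw [integral_sub hInt1 hInt2]
      ring
    rw [hdiff, abs_mul, abs_of_pos (inv_pos.mpr hγ)]
    have hL : |∫ y, (g₁ y - g₂ y)|
        ≤ (∫⁻ y, ENNReal.ofReal ‖g₁ y - g₂ y‖).toReal := by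
      rw [← Real.norm_eq_abs]
      exact norm_integral_le_lintegral_norm _
    have hpt : ∀ y, ENNReal.ofReal ‖g₁ y - g₂ y‖
        ≤ Set.indicator ((cube n (0 : Rn n) (2*l))ᶜ)
            (fun y => ENNReal.ofReal (C₁ * ‖x₁ - x₂‖ * (|f y| / ‖y‖ ^ (q+1)))) y := by
      intro y
      by_cases hy : y ∈ cube n (0 : Rn n) (2*l)
      · have hf0 : f y = 0 := by
          by_contra h
          exact (hsupp (Function.mem_support.mpr h)) hy
        rw [Set.indicator_of_notMem (by simpa using hy)]
        simp [hg₁, hg₂, hf0]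
      · rw [Set.indicator_of_mem (by simpa using hy)]
        apply ENNReal.ofReal_le_ofReal
        have hker := aux_kernel hα0 hαn hl h1 h2 hy
        have expand : g₁ y - g₂ y = f y * (1/‖x₁ - y‖^q - 1/‖x₂ - y‖^q) := by
          simp only [hg₁, hg₂]
          ring
        rw [Real.norm_eq_abs, expand, abs_mul]
        calc |f y| * |1/‖x₁ - y‖^q - 1/‖x₂ - y‖^q|
            ≤ |f y| * (C₁ * ‖x₁ - x₂‖ / ‖y‖ ^ (q+1)) :=
              mul_le_mul_of_nonneg_left hker (abs_nonneg _)
          _ = C₁ * ‖x₁ - x₂‖ * (|f y| / ‖y‖ ^ (q+1)) := by ring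
    have hL2 : (∫⁻ y, ENNReal.ofReal ‖g₁ y - g₂ y‖)
        ≤ ENNReal.ofReal (C₁ * ‖x₁ - x₂‖) * (ENNReal.ofReal (2 * 4 ^ q / l) * M) := by
      calc (∫⁻ y, ENNReal.ofReal ‖g₁ y - g₂ y‖)
          ≤ ∫⁻ y, Set.indicator ((cube n (0 : Rn n) (2*l))ᶜ)
              (fun y => ENNReal.ofReal (C₁ * ‖x₁ - x₂‖ * (|f y| / ‖y‖ ^ (q+1)))) y :=
            lintegral_mono hpt
        _ = ∫⁻ y in (cube n (0 : Rn n) (2*l))ᶜ,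
              ENNReal.ofReal (C₁ * ‖x₁ - x₂‖ * (|f y| / ‖y‖ ^ (q+1))) :=
            lintegral_indicator (cube_meas _ _).compl _
        _ = ENNReal.ofReal (C₁ * ‖x₁ - x₂‖)
              * ∫⁻ y in (cube n (0 : Rn n) (2*l))ᶜ, ENNReal.ofReal (|f y| / ‖y‖ ^ (q+1)) := by
            simp_rw [ENNReal.ofReal_mul (by positivity : (0:ℝ) ≤ C₁ * ‖x₁ - x₂‖)]
            exact lintegral_const_mul' _ _ ofReal_ne_top
        _ ≤ ENNReal.ofReal (C₁ * ‖x₁ - x₂‖) * (ENNReal.ofReal (2 * 4 ^ q / l) * M) :=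
            mul_le_mul_right (aux_tail hα0 hαn hl f hfm) _
    have hRfin : ENNReal.ofReal (C₁ * ‖x₁ - x₂‖) * (ENNReal.ofReal (2 * 4 ^ q / l) * M) ≠ ⊤ :=
      ENNReal.mul_ne_top ofReal_ne_top (ENNReal.mul_ne_top ofReal_ne_top hMfin.ne)
    have h5 : (∫⁻ y, ENNReal.ofReal ‖g₁ y - g₂ y‖).toReal
        ≤ C₁ * ‖x₁ - x₂‖ * (2 * 4 ^ q / l * M.toReal) := by
      refine (ENNReal.toReal_mono hRfin hL2).trans_eq ?_
      rw [ENNReal.toReal_mul, ENNReal.toReal_mul, ENNReal.toReal_ofReal (by positivity),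
        ENNReal.toReal_ofReal (by positivity)]
    calc (rieszConst n α)⁻¹ * |∫ y, (g₁ y - g₂ y)|
        ≤ (rieszConst n α)⁻¹ * (C₁ * ‖x₁ - x₂‖ * (2 * 4 ^ q / l * M.toReal)) :=
          mul_le_mul_of_nonneg_left (hL.trans h5) (inv_nonneg.mpr hγ.le)
      _ = ((rieszConst n α)⁻¹ * (2 * 4 ^ q) * C₁) * (‖x₁ - x₂‖ / l) * M.toReal := by
          ring
      _ ≤ C * (‖x₁ - x₂‖ / l) * M.toReal := by
          apply mul_le_mul_of_nonneg_right _ ENNReal.toReal_nonneg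
          exact mul_le_mul_of_nonneg_right hsle (by positivity)
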